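/- Let G be a locally compact abelian group with Haar measure μ, let Q ⊆ G be a symmetric compact neighborhood of 0, and let S ⊆ G satisfy D̄(#|_S;μ) = ρ ∈ (0,∞). Then there exists a finite disjoint partition S = S₁ ∪ … ∪ S_n such that (S_j − S_j) ∩ Q = {0} for every j = 1, …, n. -/

import Mathlib

open MeasureTheory Set Pointwise Filter ENNReal

/-- The uniform asymptotic upper density of a measure `ν` with respect to `μ`:
`inf` over nonempty compact sets `C` of `sup` over Borel sets `V` with compact
closure of `ν V / μ (C + V)`, where `C + V` is a Minkowski sum. -/
noncomputable def uaud {G : Type*} [AddCommGroup G] [TopologicalSpace G] [MeasurableSpace G]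
    (ν μ : Measure G) : ℝ≥0∞ :=
  ⨅ C ∈ {C : Set G | IsCompact C ∧ C.Nonempty},
    ⨆ V ∈ {V : Set G | MeasurableSet V ∧ IsCompact (closure V)},
      ν V / μ (C + V)

/-- The counting measure of the set `S`: the sum of Dirac measures at the points of `S`,
so that `countOn S V = #(S ∩ V)` for measurable `V`. -/
noncomputable def countOn {G : Type*} [MeasurableSpace G] (S : Set G) : Measure G :=
  Measure.sum (fun s : S => Measure.dirac (s : G))

/-!
Join two distinct points of `S` when their difference lies in `Q`. Finite density yields a compact
`C` with `#(S ∩ V) ≤ (ρ + 1) μ (C + V)` for all admissible `V`; for the translates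
`V = x + (Q ∪ -Q)`, which contain all neighbours of `x`, the right-hand side does not depend on `x`.
So the graph has degree bounded by some `D`, hence a proper colouring with `D + 1` colours, and the
nonempty colour classes form the partition.
-/

theorem countOn_apply {G : Type*} [MeasurableSpace G] (S : Set G) {V : Set G}
    (hV : MeasurableSet V) : countOn S V = (S ∩ V).encard := by
  rw [countOn, Measure.sum_apply _ hV]
  simp_rw [Measure.dirac_apply' _ hV]
  rw [tsum_subtype S, indicator_indicator, ← tsum_subtype]
  exact ENNReal.tsum_set_one _

section Density

variable {G : Type*} [AddCommGroup G] [TopologicalSpace G] [MeasurableSpace G]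

theorem exists_le_mul_measure_add_of_uaud_lt {ν μ : Measure G} {c : ℝ≥0∞}
    (h : uaud ν μ < c) (hc : c ≠ ⊤) :
    ∃ C, IsCompact C ∧ C.Nonempty ∧
      ∀ V, MeasurableSet V → IsCompact (closure V) → ν V ≤ c * μ (C + V) := by
  simp only [uaud, iInf_lt_iff, mem_ofPred_eq] at h
  obtain ⟨C, ⟨hC, hCne⟩, hsup⟩ := h
  refine ⟨C, hC, hCne, fun V hV hVc => ?_⟩
  have hratio : ν V / μ (C + V) ≤ c :=
    (le_iSup₂ (f := fun V (_ : V ∈ {V : Set G | MeasurableSet V ∧ IsCompact (closure V)}) =>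
      ν V / μ (C + V)) V ⟨hV, hVc⟩).trans hsup.le
  -- no positivity of `μ (C + V)` is needed: `ν V / 0 = ⊤` unless `ν V = 0`
  exact (ENNReal.div_le_iff_le_mul (.inr hc) (.inr (pos_of_gt hsup).ne')).1 hratio

theorem exists_forall_measure_vadd_le_of_uaud_lt_top [ContinuousAdd G] [OpensMeasurableSpace G]
    [T2Space G] {ν : Measure G} (μ : Measure G) [μ.IsAddLeftInvariant]
    [IsFiniteMeasureOnCompacts μ] (h : uaud ν μ < ⊤) {K : Set G} (hK : IsCompact K) :
    ∃ B : ℕ, ∀ x : G, ν (x +ᵥ K) ≤ B := by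
  have hc : uaud ν μ + 1 ≠ ⊤ := ENNReal.add_ne_top.2 ⟨h.ne, ENNReal.one_ne_top⟩
  obtain ⟨C, hC, -, hle⟩ :=
    exists_le_mul_measure_add_of_uaud_lt (ENNReal.lt_add_right h.ne one_ne_zero) hc
  obtain ⟨B, hB⟩ := ENNReal.exists_nat_gt
    (ENNReal.mul_ne_top hc ((hC.add hK).measure_lt_top (μ := μ)).ne)
  refine ⟨B, fun x => ?_⟩
  have hxK : IsCompact (x +ᵥ K) := hK.vadd x
  calc ν (x +ᵥ K) ≤ (uaud ν μ + 1) * μ (C + (x +ᵥ K)) :=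
        hle _ hxK.measurableSet (by rwa [hxK.isClosed.closure_eq])
    _ = (uaud ν μ + 1) * μ (C + K) := by rw [add_vadd_comm, measure_vadd]
    _ ≤ B := hB.le

end Density

/-- Greedy colouring along a well-order of `V`: each vertex takes the least colour not used by
its neighbours that precede it. -/
theorem SimpleGraph.colorable_of_encard_neighborSet_le {V : Type*} (G : SimpleGraph V) {D : ℕ}
    (h : ∀ v, (G.neighborSet v).encard ≤ D) : G.Colorable (D + 1) := by
  let r : V → V → Prop := WellOrderingRel
  have hwf : WellFounded r := WellOrderingRel.isWellOrder.wf
  let c : V → ℕ := hwf.fix fun v c' => sInf {k | ∀ w (hw : r w v), G.Adj v w → c' w hw ≠ k}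
  let free (v : V) : Set ℕ := {k | ∀ w, r w v → G.Adj v w → c w ≠ k}
  have hc : ∀ v, c v = sInf (free v) := hwf.fix_eq _
  have hfree : ∀ v, ∃ k ≤ D, k ∈ free v := by
    intro v
    by_contra! hused
    have hsub : (Finset.range (D + 1) : Set ℕ) ⊆ c '' G.neighborSet v := by
      intro k hk
      obtain ⟨w, -, hvw, rfl⟩ : ∃ w, r w v ∧ G.Adj v w ∧ c w = k := by
        simpa [free] using hused k (Nat.lt_succ_iff.mp (Finset.mem_range.mp hk))
      exact ⟨w, hvw, rfl⟩
    have := (encard_le_encard hsub).trans ((encard_image_le c _).trans (h v))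
    rw [encard_coe_eq_coe_finsetCard, Finset.card_range] at this
    norm_cast at this
    omega
  have hmem : ∀ v, c v ∈ free v := fun v =>
    hc v ▸ Nat.sInf_mem (let ⟨k, _, hk⟩ := hfree v; ⟨k, hk⟩)
  refine (colorable_iff_exists_bdd_nat_coloring _).2
    ⟨Coloring.mk c fun {v w} hvw => ?_, fun v => ?_⟩
  · rcases trichotomous_of r v w with hvw' | rfl | hwv
    · exact hmem w v hvw' hvw.symm
    · exact (hvw.ne rfl).elim
    · exact (hmem v w hwv hvw).symm
  · obtain ⟨k, hkD, hk⟩ := hfree v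
    change c v < D + 1
    exact hc v ▸ (Nat.sInf_le hk).trans_lt (Nat.lt_succ_of_le hkD)

theorem exists_fin_partition_of_finite_image {α β : Type*} {S : Set α} (f : α → β)
    (hf : (f '' S).Finite) :
    ∃ (n : ℕ) (T : Fin n → Set α), Pairwise (Function.onFun Disjoint T) ∧ (⋃ j, T j) = S ∧
      ∀ j, (T j).Nonempty ∧ ∃ b, T j ⊆ f ⁻¹' {b} := by
  have := hf.to_subtype
  let e := Finite.equivFin (f '' S)
  refine ⟨_, fun j => S ∩ f ⁻¹' {(e.symm j : β)}, fun i j hij => ?_, ?_,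
    fun j => ⟨?_, _, inter_subset_right⟩⟩
  · refine Set.disjoint_left.2 fun a ha ha' => hij (e.symm.injective (Subtype.ext ?_))
    exact ha.2.symm.trans ha'.2
  · refine Subset.antisymm (iUnion_subset fun j => inter_subset_left) fun a ha => ?_
    exact mem_iUnion.2 ⟨e ⟨f a, a, ha, rfl⟩, ha, by rw [Equiv.symm_apply_apply]; rfl⟩
  · obtain ⟨a, ha, hfa⟩ := (e.symm j).2
    exact ⟨a, ha, hfa⟩

theorem Set.sub_inter_eq_singleton_zero {G : Type*} [AddGroup G] {T Q : Set G} (hT : T.Nonempty)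
    (hQ : (0 : G) ∈ Q) (hsep : ∀ a ∈ T, ∀ b ∈ T, a - b ∈ Q → a = b) : (T - T) ∩ Q = {0} := by
  refine Subset.antisymm ?_ (singleton_subset_iff.2 ⟨?_, hQ⟩)
  · rintro _ ⟨⟨a, ha, b, hb, rfl⟩, hab⟩
    simp [hsep a ha b hb hab]
  · obtain ⟨a, ha⟩ := hT
    exact ⟨a, ha, a, ha, sub_self a⟩

section NearGraph

variable {G : Type*} [AddCommGroup G]

def nearGraph (S Q : Set G) : SimpleGraph G :=
  SimpleGraph.fromRel fun a b => a ∈ S ∧ b ∈ S ∧ a - b ∈ Q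

theorem neighborSet_nearGraph_subset (S Q : Set G) (x : G) :
    (nearGraph S Q).neighborSet x ⊆ S ∩ (x +ᵥ (Q ∪ -Q)) := by
  rintro y ⟨-, ⟨-, hy, hxy⟩ | ⟨hy, -, hyx⟩⟩
  · exact ⟨hy, y - x, Or.inr (by rwa [Set.mem_neg, neg_sub]), add_sub_cancel x y⟩
  · exact ⟨hy, y - x, Or.inl hyx, add_sub_cancel x y⟩

theorem eq_of_sub_mem_of_color_eq {S Q : Set G} {β : Type*} (c : (nearGraph S Q).Coloring β)
    {a b : G} (ha : a ∈ S) (hb : b ∈ S) (hab : a - b ∈ Q) (hc : c a = c b) : a = b := by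
  by_contra hne
  exact c.valid ((SimpleGraph.fromRel_adj _ a b).2 ⟨hne, .inl ⟨ha, hb, hab⟩⟩) hc

end NearGraph

theorem partition_of_finite_density_general {G : Type*} [AddCommGroup G]
    [TopologicalSpace G] [IsTopologicalAddGroup G] [T2Space G]
    [MeasurableSpace G] [BorelSpace G]
    (μ : Measure G) [μ.IsAddHaarMeasure]
    (Q : Set G) (hQcomp : IsCompact Q) (hQnhds : Q ∈ nhds (0 : G))
    (S : Set G) (ρ : ℝ≥0∞)
    (hρ : uaud (countOn S) μ = ρ) (hρfin : ρ < ⊤) :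
    ∃ (n : ℕ) (T : Fin n → Set G),
      Pairwise (Function.onFun Disjoint T) ∧ (⋃ j, T j) = S ∧
      ∀ j, (T j - T j) ∩ Q = {0} := by
  have hK : IsCompact (Q ∪ -Q) := hQcomp.union hQcomp.neg
  obtain ⟨B, hB⟩ := exists_forall_measure_vadd_le_of_uaud_lt_top μ (hρ ▸ hρfin) hK
  have hdeg : ∀ x, ((nearGraph S Q).neighborSet x).encard ≤ B := fun x => by
    rw [← ENat.toENNReal_le, ENat.toENNReal_coe]
    calc (((nearGraph S Q).neighborSet x).encard : ℝ≥0∞)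
        ≤ (S ∩ (x +ᵥ (Q ∪ -Q))).encard :=
          ENat.toENNReal_le.2 (encard_le_encard (neighborSet_nearGraph_subset S Q x))
      _ = countOn S (x +ᵥ (Q ∪ -Q)) := (countOn_apply S (hK.vadd x).measurableSet).symm
      _ ≤ B := hB x
  obtain ⟨c⟩ := (nearGraph S Q).colorable_of_encard_neighborSet_le hdeg
  obtain ⟨n, T, hdisj, hcover, hT⟩ := exists_fin_partition_of_finite_image c (toFinite (c '' S))
  refine ⟨n, T, hdisj, hcover, fun j => ?_⟩
  obtain ⟨hne, b, hb⟩ := hT j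
  have hTS : T j ⊆ S := hcover ▸ subset_iUnion T j
  refine sub_inter_eq_singleton_zero hne (mem_of_mem_nhds hQnhds) fun a ha a' ha' haa' => ?_
  exact eq_of_sub_mem_of_color_eq c (hTS ha) (hTS ha') haa' ((hb ha).trans (hb ha').symm)

theorem partition_of_finite_density {G : Type*} [AddCommGroup G]
    [TopologicalSpace G] [IsTopologicalAddGroup G] [LocallyCompactSpace G] [T2Space G]
    [MeasurableSpace G] [BorelSpace G]
    (μ : Measure G) [μ.IsAddHaarMeasure]
    (Q : Set G) (hQcomp : IsCompact Q) (hQsymm : Q = -Q) (hQnhds : Q ∈ nhds (0 : G))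
    (S : Set G) (ρ : ℝ≥0∞)
    (hρ : uaud (countOn S) μ = ρ) (hρ0 : 0 < ρ) (hρfin : ρ < ⊤) :
    ∃ (n : ℕ) (T : Fin n → Set G),
      Pairwise (Function.onFun Disjoint T) ∧ (⋃ j, T j) = S ∧
      ∀ j, (T j - T j) ∩ Q = {0} :=
  partition_of_finite_density_general μ Q hQcomp hQnhds S ρ hρ hρfin
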